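/- Let (U_k)_{k ≥ 0} be independent random variables uniformly distributed on [0,1], and let N be an independent random variable with geometric distribution P(N = n) = (1/8)·(7/8)^n for n = 0, 1, 2, .... Define X_0 = U_0/4 and recursively X_k = G_{X_{k−1}}^{−1}(U_k) for k ≥ 1. Then the random variable X_N has law μ, the unique solution of the distributional fixed-point equation Y =_d U·Y + U·(1−U). -/

import Mathlib

open MeasureTheory ProbabilityTheory

/-- The distribution function `F_x` of `U·x + U·(1−U)` for `U` uniform on `[0,1]`. -/
noncomputable def F (x y : ℝ) : ℝ :=
  if y < x then (1 + x - Real.sqrt ((1 + x) ^ 2 - 4 * y)) / 2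
  else if y < ((1 + x) / 2) ^ 2 then 1 - Real.sqrt ((1 + x) ^ 2 - 4 * y)
  else 1

/-- `G_x(y) = (8/7)·(F_x(y) − (1/2)·min(y, 1/4))`. -/
noncomputable def G (x y : ℝ) : ℝ := 8 / 7 * (F x y - (1 / 2) * min y (1 / 4))

/-- The quantile function (generalized inverse) `G_x^{−1} : [0,1] → [0,1]` of the
distribution with CDF `G_x`. -/
noncomputable def Ginv (x z : ℝ) : ℝ := sInf {y ∈ Set.Icc (0:ℝ) 1 | z ≤ G x y}

/-!
For `x ∈ [0,1]` the law of `U·x + U·(1−U)` has CDF `F_x`, whose density is at least `1/2` on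
`[0,1/4]`; hence it splits as `(1/8)·law(U/4) + (7/8)·law(G_x⁻¹(U))`. A solution `μ` of the
fixed-point equation lives on `[0,1]`, since mass outside `[0,1]` escapes with positive probability
from every point and is never re-entered. On `[0,1]` the splitting gives `μ = (1/8)·ρ + (7/8)·Kμ`,
where `ρ = law(U/4)` and `K` is the Markov kernel `x ↦ law(G_x⁻¹(U))`, and iterating it,
`μ = ∑ₙ (1/8)(7/8)ⁿ Kⁿρ`. The chain `X_n` has law `Kⁿρ`, and averaging over the independent
geometric `N` yields the same series.
-/

open Set
open scoped ENNReal

instance : IsProbabilityMeasure (volume.restrict (Icc (0:ℝ) 1)) := ⟨by simp⟩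

-- `Ginv x` is `quantileIcc (G x)` by definition. For `z > 1` the set is empty and `sInf ∅ = 0`.
noncomputable def quantileIcc (g : ℝ → ℝ) (z : ℝ) : ℝ := sInf {y ∈ Icc (0:ℝ) 1 | z ≤ g y}

lemma quantileIcc_mem_Icc (g : ℝ → ℝ) (z : ℝ) : quantileIcc g z ∈ Icc 0 1 := by
  rcases eq_empty_or_nonempty {y ∈ Icc (0:ℝ) 1 | z ≤ g y} with h | ⟨y, hy⟩
  · rw [quantileIcc, h, Real.sInf_empty]
    exact left_mem_Icc.2 zero_le_one
  · exact ⟨le_csInf ⟨y, hy⟩ fun y hy => hy.1.1, (csInf_le ⟨0, fun y hy => hy.1.1⟩ hy).trans hy.1.2⟩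

lemma quantileIcc_le_iff {g : ℝ → ℝ} (hcont : ContinuousOn g (Icc 0 1))
    (hmono : MonotoneOn g (Icc 0 1)) (h₀ : g 0 = 0) (h₁ : g 1 = 1) {y z : ℝ} (hy : y ∈ Icc 0 1) :
    quantileIcc g z ≤ y ↔ z ≤ g y ∨ z ≤ 0 ∨ 1 < z := by
  have hbdd : BddBelow {y ∈ Icc (0:ℝ) 1 | z ≤ g y} := ⟨0, fun y hy => hy.1.1⟩
  rcases le_or_gt z 0 with hz₀ | hz₀
  · have : quantileIcc g z ≤ 0 := csInf_le hbdd ⟨left_mem_Icc.2 zero_le_one, by rwa [h₀]⟩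
    simp only [this.trans hy.1, hz₀, true_or, or_true]
  rcases le_or_gt z 1 with hz₁ | hz₁
  · have hmem : quantileIcc g z ∈ {y ∈ Icc (0:ℝ) 1 | z ≤ g y} :=
      (hcont.preimage_isClosed_of_isClosed isClosed_Icc isClosed_Ici).csInf_mem
        ⟨1, right_mem_Icc.2 zero_le_one, by rwa [mem_preimage, h₁]⟩ hbdd
    refine ⟨fun h => Or.inl (hmem.2.trans (hmono hmem.1 hy h)), ?_⟩
    rintro (h | h | h)
    · exact csInf_le hbdd ⟨hy, h⟩
    · linarith
    · linarith
  · have hempty : {y ∈ Icc (0:ℝ) 1 | z ≤ g y} = ∅ :=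
      eq_empty_of_forall_notMem fun y hy => by
        linarith [hy.2, h₁ ▸ hmono hy.1 (right_mem_Icc.2 zero_le_one) hy.1.2]
    simp only [hz₁, or_true, iff_true]
    rw [quantileIcc, hempty, Real.sInf_empty]
    exact hy.1

lemma measurable_quantileIcc {X : Type*} [MeasurableSpace X] {g : X → ℝ → ℝ}
    (hcont : ∀ x, ContinuousOn (g x) (Icc 0 1)) (hmono : ∀ x, MonotoneOn (g x) (Icc 0 1))
    (h₀ : ∀ x, g x 0 = 0) (h₁ : ∀ x, g x 1 = 1) (hmeas : ∀ y, Measurable fun x => g x y) :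
    Measurable fun p : X × ℝ => quantileIcc (g p.1) p.2 := by
  refine measurable_of_Iic fun y => ?_
  rcases lt_or_ge y 0 with hy₀ | hy₀
  · convert MeasurableSet.empty
    exact eq_empty_of_forall_notMem fun p hp => hy₀.not_ge ((quantileIcc_mem_Icc _ _).1.trans hp)
  rcases le_or_gt 1 y with hy₁ | hy₁
  · convert MeasurableSet.univ
    exact eq_univ_of_forall fun p => (quantileIcc_mem_Icc _ _).2.trans hy₁
  have : (fun p : X × ℝ => quantileIcc (g p.1) p.2) ⁻¹' Iic y =
      {p | p.2 ≤ g p.1 y} ∪ ({p | p.2 ≤ 0} ∪ {p | 1 < p.2}) := by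
    ext p
    exact quantileIcc_le_iff (hcont p.1) (hmono p.1) (h₀ p.1) (h₁ p.1) ⟨hy₀, hy₁.le⟩
  rw [this]
  exact (measurableSet_le measurable_snd ((hmeas y).comp measurable_fst)).union
    ((measurableSet_le measurable_snd measurable_const).union
      (measurableSet_lt measurable_const measurable_snd))

lemma map_quantileIcc_Iic {g : ℝ → ℝ} (hcont : ContinuousOn g (Icc 0 1))
    (hmono : MonotoneOn g (Icc 0 1)) (h₀ : g 0 = 0) (h₁ : g 1 = 1)
    (hmeas : Measurable (quantileIcc g)) {y : ℝ} (hy : y ∈ Icc 0 1) :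
    ((volume.restrict (Icc (0:ℝ) 1)).map (quantileIcc g)) (Iic y) = ENNReal.ofReal (g y) := by
  have hgy : g y ∈ Icc 0 1 :=
    ⟨h₀ ▸ hmono (left_mem_Icc.2 zero_le_one) hy hy.1,
      h₁ ▸ hmono hy (right_mem_Icc.2 zero_le_one) hy.2⟩
  have : quantileIcc g ⁻¹' Iic y ∩ Icc 0 1 = Icc 0 (g y) := by
    ext z
    simp only [mem_inter_iff, mem_preimage, mem_Iic, quantileIcc_le_iff hcont hmono h₀ h₁ hy,
      mem_Icc]
    constructor
    · rintro ⟨h | h | h, hz₀, hz₁⟩ <;> refine ⟨hz₀, ?_⟩ <;> linarith [hgy.1]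
    · rintro ⟨hz₀, hz⟩
      exact ⟨Or.inl hz, hz₀, hz.trans hgy.2⟩
  rw [Measure.map_apply hmeas measurableSet_Iic, Measure.restrict_apply (hmeas measurableSet_Iic),
    this, Real.volume_Icc, sub_zero]

lemma ext_of_Iic_of_compl_Icc {μ ν : Measure ℝ} [IsFiniteMeasure μ] {a b : ℝ} (hab : a ≤ b)
    (hμ : μ (Icc a b)ᶜ = 0) (hν : ν (Icc a b)ᶜ = 0) (h : ∀ y ∈ Icc a b, μ (Iic y) = ν (Iic y)) :
    μ = ν := by
  refine Measure.ext_of_Iic μ ν fun y => ?_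
  rcases lt_or_ge y a with hya | hay
  · have hsub : Iic y ⊆ (Icc a b)ᶜ := fun z hz hz' => (hz.trans_lt hya).not_ge hz'.1
    rw [measure_mono_null hsub hμ, measure_mono_null hsub hν]
  rcases le_or_gt y b with hyb | hby
  · exact h y ⟨hay, hyb⟩
  · have hdiff : Iic y \ Iic b ⊆ (Icc a b)ᶜ := fun z hz hz' => hz.2 hz'.2
    have hsub : Iic b ⊆ Iic y := Iic_subset_Iic.2 hby.le
    rw [← measure_eq_measure_of_null_sdiff hsub (measure_mono_null hdiff hμ),
      ← measure_eq_measure_of_null_sdiff hsub (measure_mono_null hdiff hν), h b ⟨hab, le_rfl⟩]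

lemma map_restrict_compl_eq_zero {α β : Type*} [MeasurableSpace α] [MeasurableSpace β]
    {μ : Measure α} {s : Set α} {t : Set β} {f : α → β} (hf : Measurable f) (ht : MeasurableSet t)
    (hst : MapsTo f s t) : ((μ.restrict s).map f) tᶜ = 0 := by
  rw [Measure.map_apply hf ht.compl, Measure.restrict_apply (hf ht.compl)]
  exact measure_mono_null (fun a ha => ha.1 (hst ha.2)) measure_empty

noncomputable def lawKernel {α β γ : Type*} [MeasurableSpace α] [MeasurableSpace β]
    [MeasurableSpace γ] (h : α × β → γ) (ν : Measure β) : Kernel α γ :=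
  (Kernel.id ×ₖ Kernel.const α ν).map h

section lawKernel

variable {α β γ : Type*} [MeasurableSpace α] [MeasurableSpace β] [MeasurableSpace γ]
  {h : α × β → γ} {ν : Measure β}

lemma lawKernel_apply [SFinite ν] (hh : Measurable h) (a : α) :
    lawKernel h ν a = ν.map fun b => h (a, b) := by
  rw [lawKernel, Kernel.map_apply _ hh, Kernel.prod_apply, Kernel.id_apply, Kernel.const_apply,
    Measure.dirac_prod, Measure.map_map hh measurable_prodMk_left]
  rfl

lemma isMarkovKernel_lawKernel [IsProbabilityMeasure ν] (hh : Measurable h) :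
    IsMarkovKernel (lawKernel h ν) :=
  Kernel.IsMarkovKernel.map _ hh

lemma lawKernel_comp [SFinite ν] (hh : Measurable h) (μ : Measure α) [SFinite μ] :
    lawKernel h ν ∘ₘ μ = (μ.prod ν).map h := by
  rw [lawKernel, ← Measure.map_comp μ _ hh, ← Measure.compProd_eq_comp_prod,
    Measure.compProd_const]

end lawKernel

lemma measure_eq_zero_of_comp_eq {α : Type*} [MeasurableSpace α] {κ : Kernel α α} {μ : Measure α}
    [IsFiniteMeasure μ] (hμ : κ ∘ₘ μ = μ) {A : Set α} (hA : MeasurableSet A)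
    (h_out : ∀ x ∉ A, κ x A = 0) (h_lt : ∀ x ∈ A, κ x A < 1) : μ A = 0 := by
  by_contra hμA
  have h_int : μ A = ∫⁻ x in A, κ x A ∂μ := by
    conv_lhs => rw [← hμ]
    rw [Measure.bind_apply hA κ.aemeasurable,
      setLIntegral_eq_of_support_subset fun x hx => not_imp_comm.1 (h_out x) hx]
  have h_lt_int : ∫⁻ x in A, κ x A ∂μ < ∫⁻ _ in A, 1 ∂μ :=
    setLIntegral_strict_mono hA hμA measurable_const
      (ne_top_of_le_ne_top (measure_ne_top μ A) (h_int.symm.le)) (ae_of_all _ h_lt)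
  rw [setLIntegral_const, one_mul, ← h_int] at h_lt_int
  exact h_lt_int.false

open Function in
lemma eq_sum_range_add_iterate_comp {α : Type*} [MeasurableSpace α] {κ : Kernel α α}
    {μ ρ : Measure α} {c q : ℝ≥0∞} (h : μ = c • ρ + q • (κ ∘ₘ μ)) (n : ℕ) :
    μ = (∑ k ∈ Finset.range n, (c * q ^ k) • (fun ν => κ ∘ₘ ν)^[k] ρ) +
      q ^ n • (fun ν => κ ∘ₘ ν)^[n] μ := by
  set T : Measure α → Measure α := fun ν => κ ∘ₘ ν
  have hstep : ∀ n, T^[n] μ = c • T^[n] ρ + q • T^[n + 1] μ := by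
    intro n
    induction n with
    | zero => exact h
    | succ n ih =>
      rw [iterate_succ_apply' T n, ih, iterate_succ_apply' T n ρ, iterate_succ_apply' T (n + 1) μ]
      simp only [T, Measure.comp_add, Measure.comp_smul]
  induction n with
  | zero => simp
  | succ n ih =>
    conv_lhs => rw [ih, hstep n]
    rw [Finset.sum_range_succ, smul_add, smul_smul, smul_smul, add_assoc, pow_succ, mul_comm c]

open Function in
lemma eq_sum_iterate_comp {α : Type*} [MeasurableSpace α] {κ : Kernel α α} [IsMarkovKernel κ]
    {μ ρ : Measure α} [IsProbabilityMeasure μ] {c q : ℝ≥0∞} (hq : q < 1)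
    (h : μ = c • ρ + q • (κ ∘ₘ μ)) :
    μ = Measure.sum fun n => (c * q ^ n) • (fun ν => κ ∘ₘ ν)^[n] ρ := by
  set T : Measure α → Measure α := fun ν => κ ∘ₘ ν
  have hprob : ∀ n, IsProbabilityMeasure (T^[n] μ) := by
    intro n
    induction n with
    | zero => assumption
    | succ n ih => rw [iterate_succ_apply']; infer_instance
  ext s hs
  have hpartial : ∀ n, μ s = (∑ k ∈ Finset.range n, c * q ^ k * T^[k] ρ s) + q ^ n * T^[n] μ s :=
    fun n => by
      conv_lhs => rw [eq_sum_range_add_iterate_comp h n]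
      simp [Measure.coe_finsetSum, Finset.sum_apply, T]
  rw [Measure.sum_apply _ hs]
  simp only [Measure.smul_apply, smul_eq_mul]
  refine le_antisymm ?_ (ENNReal.tsum_le_of_sum_range_le fun n => (hpartial n).symm ▸ le_self_add)
  have hlim := (tendsto_const_nhds (x := ∑' k, c * q ^ k * T^[k] ρ s)).add
    (ENNReal.tendsto_pow_atTop_nhds_zero_of_lt_one hq)
  rw [add_zero] at hlim
  refine ge_of_tendsto' hlim fun n => ?_
  rw [hpartial n]
  gcongr
  · exact ENNReal.sum_le_tsum _
  · exact mul_le_of_le_one_right' prob_le_one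

lemma map_apply_index_eq_sum {Ω β ι : Type*} [MeasurableSpace Ω] [MeasurableSpace β]
    [MeasurableSpace ι] [Countable ι] [MeasurableSingletonClass ι] {P : Measure Ω}
    {Y : ι → Ω → β} {N : Ω → ι} (hY : ∀ i, Measurable (Y i)) (hN : Measurable N)
    (hind : ∀ i, IndepFun N (Y i) P) :
    P.map (fun ω => Y (N ω) ω) = Measure.sum fun i => P (N ⁻¹' {i}) • P.map (Y i) := by
  have hmeas : Measurable fun ω => Y (N ω) ω :=
    (measurable_from_prod_countable_left (f := fun p : Ω × ι => Y p.2 p.1) hY).comp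
      (measurable_id.prodMk hN)
  ext s hs
  have hdecomp : (fun ω => Y (N ω) ω) ⁻¹' s = ⋃ i, N ⁻¹' {i} ∩ Y i ⁻¹' s := by
    ext ω
    simp
  rw [Measure.map_apply hmeas hs, Measure.sum_apply _ hs, hdecomp,
    measure_iUnion (fun i j hij => Disjoint.mono inter_subset_left inter_subset_left
      ((disjoint_singleton.2 hij).preimage N))
      fun i => (hN (measurableSet_singleton i)).inter (hY i hs)]
  congr with i
  rw [Measure.smul_apply, smul_eq_mul, Measure.map_apply (hY i) hs,
    (hind i).measure_inter_preimage_eq_mul _ _ (measurableSet_singleton i) hs]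

-- `F x y` is the length of `{u ∈ [0,1] | u * x + u * (1 - u) ≤ y} = [0, r₁] ∪ [r₂, 1]`, where
-- `r₁, r₂ = (1 + x ∓ √((1 + x) ^ 2 - 4 * y)) / 2`; for `y ≥ ((1 + x) / 2) ^ 2` the radicand is
-- negative, `√` returns `0` and the formula gives `1`.
lemma F_eq_of_le_one {x : ℝ} (hx : x ≤ 1) (y : ℝ) :
    F x y =
      (1 + x - √((1 + x) ^ 2 - 4 * y)) / 2 + max 0 ((1 - x - √((1 + x) ^ 2 - 4 * y)) / 2) := by
  set s := √((1 + x) ^ 2 - 4 * y) with hs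
  have hs0 : 0 ≤ s := Real.sqrt_nonneg _
  unfold F
  split_ifs with h₁ h₂
  · have : 1 - x < s := by
      rw [hs, show 1 - x = √((1 - x) ^ 2) by rw [Real.sqrt_sq (by linarith)]]
      exact Real.sqrt_lt_sqrt (sq_nonneg _) (by nlinarith)
    rw [max_eq_left (by linarith)]; ring
  · have : s ≤ 1 - x := by
      rw [hs, show 1 - x = √((1 - x) ^ 2) by rw [Real.sqrt_sq (by linarith)]]
      exact Real.sqrt_le_sqrt (by nlinarith)
    rw [max_eq_right (by linarith)]; ring
  · have : s = 0 := Real.sqrt_eq_zero'.mpr (by nlinarith)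
    rw [this, max_eq_right (by linarith)]; ring

lemma continuous_G {x : ℝ} (hx : x ≤ 1) : Continuous (G x) := by
  have : F x = fun y => (1 + x - √((1 + x) ^ 2 - 4 * y)) / 2 +
      max 0 ((1 - x - √((1 + x) ^ 2 - 4 * y)) / 2) := funext (F_eq_of_le_one hx)
  unfold G
  rw [this]
  fun_prop

lemma G_zero {x : ℝ} (hx : x ∈ Icc 0 1) : G x 0 = 0 := by
  rw [G, F_eq_of_le_one hx.2, mul_zero, sub_zero, Real.sqrt_sq (by linarith [hx.1])]
  simp only [max_eq_left (by linarith [hx.1] : (1 - x - (1 + x)) / 2 ≤ 0)]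
  norm_num

lemma G_one {x : ℝ} (hx : x ∈ Icc 0 1) : G x 1 = 1 := by
  rw [G, F_eq_of_le_one hx.2, Real.sqrt_eq_zero'.mpr (by nlinarith [hx.1, hx.2]),
    max_eq_right (by linarith [hx.2])]
  norm_num
  ring

lemma div_four_le_sqrt_sub_sqrt {a b : ℝ} (hb : 0 ≤ b) (hba : b ≤ a) (ha : a ≤ 4) :
    (a - b) / 4 ≤ √a - √b := by
  have hsa : √a ≤ 2 := Real.sqrt_le_iff.mpr ⟨by norm_num, by linarith⟩
  have hsb : √b ≤ √a := Real.sqrt_le_sqrt hba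
  have := Real.sq_sqrt hb
  have := Real.sq_sqrt (hb.trans hba)
  nlinarith [Real.sqrt_nonneg b]

lemma monotoneOn_G {x : ℝ} (hx : x ∈ Icc 0 1) : MonotoneOn (G x) (Icc 0 1) := by
  obtain ⟨hx₀, hx₁⟩ := hx
  have hb₁ : ((1 + x) / 2) ^ 2 ≤ 1 := by nlinarith
  -- below `((1 + x) / 2) ^ 2` the density of `F x` is at least `1/2`; above it `G x = 1`
  have hlow : MonotoneOn (G x) (Icc 0 (((1 + x) / 2) ^ 2)) := by
    intro y₁ hy₁ y₂ hy₂ h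
    have key := div_four_le_sqrt_sub_sqrt (a := (1 + x) ^ 2 - 4 * y₁) (b := (1 + x) ^ 2 - 4 * y₂)
      (by nlinarith [hy₂.2]) (by linarith) (by nlinarith [hy₁.1])
    have hmax : max 0 ((1 - x - √((1 + x) ^ 2 - 4 * y₁)) / 2) ≤
        max 0 ((1 - x - √((1 + x) ^ 2 - 4 * y₂)) / 2) := by
      gcongr
    have hmin : min y₂ (1 / 4) - min y₁ (1 / 4) ≤ y₂ - y₁ := by
      rcases le_total y₁ (1/4) with h1 | h1 <;> rcases le_total y₂ (1/4) with h2 | h2 <;>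
        simp only [min_eq_left, min_eq_right, h1, h2] <;> linarith
    simp only [G, F_eq_of_le_one hx₁]
    nlinarith
  have hhigh : MonotoneOn (G x) (Icc (((1 + x) / 2) ^ 2) 1) := by
    have hG : ∀ y ∈ Icc (((1 + x) / 2) ^ 2) 1, G x y = 1 := fun y hy => by
      rw [G, F_eq_of_le_one hx₁, Real.sqrt_eq_zero'.mpr (by nlinarith [hy.1]),
        max_eq_right (by linarith), min_eq_right (by nlinarith [hy.1])]
      ring
    intro y₁ hy₁ y₂ hy₂ _
    rw [hG _ hy₁, hG _ hy₂]
  rw [← Icc_union_Icc_eq_Icc (by positivity) hb₁]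
  exact hlow.union_right hhigh (isGreatest_Icc (by positivity)) (isLeast_Icc hb₁)

lemma measurable_G_left (y : ℝ) : Measurable fun x => G x y := by
  unfold G F
  refine Measurable.const_mul (Measurable.sub_const ?_ _) _
  exact Measurable.ite (measurableSet_lt measurable_const measurable_id) (by fun_prop)
    (Measurable.ite (measurableSet_lt measurable_const (by fun_prop)) (by fun_prop)
      measurable_const)

-- Clamping the state into `[0,1]` makes the step jointly measurable without changing it there.
noncomputable def residualStep (x z : ℝ) : ℝ := Ginv (projIcc 0 1 zero_le_one x) z

lemma measurable_residualStep : Measurable (Function.uncurry residualStep) := by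
  have hp : ∀ x : ℝ, (projIcc (0:ℝ) 1 zero_le_one x : ℝ) ∈ Icc 0 1 := fun x => (projIcc _ _ _ x).2
  exact measurable_quantileIcc (g := fun x => G (projIcc (0:ℝ) 1 zero_le_one x))
    (fun x => (continuous_G (hp x).2).continuousOn) (fun x => monotoneOn_G (hp x))
    (fun x => G_zero (hp x)) (fun x => G_one (hp x))
    fun y => (measurable_G_left y).comp (continuous_subtype_val.comp continuous_projIcc).measurable

lemma residualStep_of_mem {x : ℝ} (hx : x ∈ Icc 0 1) : residualStep x = Ginv x := by
  ext z
  rw [residualStep, projIcc_of_mem _ hx]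

lemma residualStep_mem_Icc (x z : ℝ) : residualStep x z ∈ Icc 0 1 := quantileIcc_mem_Icc _ _

lemma map_Ginv_Iic {x : ℝ} (hx : x ∈ Icc 0 1) {y : ℝ} (hy : y ∈ Icc 0 1) :
    ((volume.restrict (Icc (0:ℝ) 1)).map (Ginv x)) (Iic y) = ENNReal.ofReal (G x y) := by
  have hmeas : Measurable (Ginv x) := by
    rw [← residualStep_of_mem hx]
    exact measurable_residualStep.comp (measurable_const.prodMk measurable_id)
  exact map_quantileIcc_Iic (continuous_G hx.2).continuousOn (monotoneOn_G hx) (G_zero hx)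
    (G_one hx) hmeas hy

lemma update_preimage_Iic_inter_Icc {x y : ℝ} (hx₀ : 0 ≤ x) (hx₁ : x ≤ 1) (hy : 0 ≤ y)
    (hD : 0 ≤ (1 + x) ^ 2 - 4 * y) :
    (fun u : ℝ => u * x + u * (1 - u)) ⁻¹' Iic y ∩ Icc 0 1 =
      Icc 0 ((1 + x - √((1 + x) ^ 2 - 4 * y)) / 2) ∪
        Icc ((1 + x + √((1 + x) ^ 2 - 4 * y)) / 2) 1 := by
  set s := √((1 + x) ^ 2 - 4 * y)
  have hs₂ : s ^ 2 = (1 + x) ^ 2 - 4 * y := Real.sq_sqrt hD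
  have hs₀ : 0 ≤ s := Real.sqrt_nonneg _
  have hsx : s ≤ 1 + x := by nlinarith
  have hfac : ∀ u, u * x + u * (1 - u) ≤ y ↔
      0 ≤ (u - (1 + x - s) / 2) * (u - (1 + x + s) / 2) := fun u => by
    rw [show (u - (1 + x - s) / 2) * (u - (1 + x + s) / 2) = y - (u * x + u * (1 - u)) by
      linear_combination (-1/4) * hs₂, sub_nonneg]
  ext u
  simp only [mem_inter_iff, mem_preimage, mem_Iic, hfac, mem_union, mem_Icc]
  constructor
  · rintro ⟨h, hu₀, hu₁⟩
    rcases le_or_gt u ((1 + x - s) / 2) with hu | hu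
    · exact Or.inl ⟨hu₀, hu⟩
    · exact Or.inr ⟨by nlinarith, hu₁⟩
  · rintro (⟨hu₀, hu⟩ | ⟨hu, hu₁⟩)
    · exact ⟨by nlinarith, hu₀, by linarith⟩
    · exact ⟨by nlinarith, by linarith, hu₁⟩

lemma map_update_Iic {x : ℝ} (hx₀ : 0 ≤ x) (hx₁ : x ≤ 1) {y : ℝ} (hy : 0 ≤ y) :
    ((volume.restrict (Icc (0:ℝ) 1)).map fun u => u * x + u * (1 - u)) (Iic y) =
      ENNReal.ofReal (F x y) := by
  have hf : Measurable fun u : ℝ => u * x + u * (1 - u) := by fun_prop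
  rw [Measure.map_apply hf measurableSet_Iic, Measure.restrict_apply (hf measurableSet_Iic),
    F_eq_of_le_one hx₁]
  rcases lt_or_ge ((1 + x) ^ 2 - 4 * y) 0 with hD | hD
  · have hset : (fun u : ℝ => u * x + u * (1 - u)) ⁻¹' Iic y ∩ Icc 0 1 = Icc 0 1 :=
      inter_eq_right.2 fun u _ => by
        simp only [mem_preimage, mem_Iic]; nlinarith [sq_nonneg (u - (1 + x) / 2)]
    rw [hset, Real.volume_Icc, Real.sqrt_eq_zero'.2 hD.le, max_eq_right (by linarith)]
    ring_nf
  set s := √((1 + x) ^ 2 - 4 * y)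
  have hs₀ : 0 ≤ s := Real.sqrt_nonneg _
  have hsx : s ≤ 1 + x := by nlinarith [Real.sq_sqrt hD]
  have hdisj : AEDisjoint volume (Icc 0 ((1 + x - s) / 2)) (Icc ((1 + x + s) / 2) 1) := by
    rw [AEDisjoint, Icc_inter_Icc, Real.volume_Icc, ENNReal.ofReal_eq_zero]
    linarith [min_le_left ((1 + x - s) / 2) 1, le_max_right 0 ((1 + x + s) / 2)]
  have hmax : ENNReal.ofReal (1 - (1 + x + s) / 2) = ENNReal.ofReal (max 0 ((1 - x - s) / 2)) := by
    rw [ENNReal.ofReal_max, ENNReal.ofReal_zero, zero_max]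
    ring_nf
  rw [update_preimage_Iic_inter_Icc hx₀ hx₁ hy hD,
    measure_union₀ measurableSet_Icc.nullMeasurableSet hdisj, Real.volume_Icc, Real.volume_Icc,
    sub_zero, hmax, ← ENNReal.ofReal_add (by linarith) (le_max_left _ _)]

noncomputable def updateKernel : Kernel ℝ ℝ :=
  lawKernel (fun p : ℝ × ℝ => p.2 * p.1 + p.2 * (1 - p.2)) (volume.restrict (Icc 0 1))

noncomputable def residualKernel : Kernel ℝ ℝ :=
  lawKernel (Function.uncurry residualStep) (volume.restrict (Icc 0 1))

noncomputable def couplingLaw : Measure ℝ := (volume.restrict (Icc (0:ℝ) 1)).map (· / 4)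

instance : IsMarkovKernel residualKernel := isMarkovKernel_lawKernel measurable_residualStep

lemma updateKernel_apply (x : ℝ) {s : Set ℝ} (hs : MeasurableSet s) :
    updateKernel x s = volume ((fun u => u * x + u * (1 - u)) ⁻¹' s ∩ Icc 0 1) := by
  have hf : Measurable fun u : ℝ => u * x + u * (1 - u) := by fun_prop
  rw [updateKernel, lawKernel_apply (by fun_prop), Measure.map_apply hf hs,
    Measure.restrict_apply (hf hs)]

lemma updateKernel_eq_zero {x : ℝ} {s : Set ℝ} (hs : MeasurableSet s)
    (h : ∀ u ∈ Icc (0:ℝ) 1, u * x + u * (1 - u) ∉ s) : updateKernel x s = 0 := by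
  rw [updateKernel_apply x hs]
  exact measure_mono_null (fun u hu => h u hu.2 hu.1) measure_empty

lemma updateKernel_lt_one {x a : ℝ} (ha : 0 < a) {s : Set ℝ} (hs : MeasurableSet s)
    (h : ∀ u ∈ Icc (0:ℝ) 1, u * x + u * (1 - u) ∈ s → a ≤ u) : updateKernel x s < 1 := by
  rw [updateKernel_apply x hs]
  calc _ ≤ volume (Icc a 1) := measure_mono fun u hu => ⟨h u hu.2 hu.1, hu.2.2⟩
    _ < 1 := by rw [Real.volume_Icc]; exact ENNReal.ofReal_lt_one.2 (by linarith)

lemma volume_restrict_Icc_Iic (t : ℝ) :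
    volume.restrict (Icc (0:ℝ) 1) (Iic t) = ENNReal.ofReal (min t 1) := by
  rw [Measure.restrict_apply measurableSet_Iic,
    show Iic t ∩ Icc 0 1 = Icc 0 (min t 1) by
      ext u; simp only [mem_inter_iff, mem_Iic, mem_Icc, le_min_iff]; tauto,
    Real.volume_Icc, sub_zero]

lemma couplingLaw_Iic (y : ℝ) :
    couplingLaw (Iic y) = ENNReal.ofReal (min (4 * y) 1) := by
  rw [couplingLaw, Measure.map_apply (by fun_prop) measurableSet_Iic,
    show (· / 4) ⁻¹' Iic y = Iic (4 * y) by ext u; simp [div_le_iff₀, mul_comm],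
    volume_restrict_Icc_Iic]

lemma updateKernel_eq_add {x : ℝ} (hx : x ∈ Icc 0 1) :
    updateKernel x =
      ENNReal.ofReal (1 / 8) • couplingLaw + ENNReal.ofReal (7 / 8) • residualKernel x := by
  rw [updateKernel, residualKernel, lawKernel_apply (by fun_prop),
    lawKernel_apply measurable_residualStep]
  refine ext_of_Iic_of_compl_Icc zero_le_one ?_ ?_ fun y hy => ?_
  · refine map_restrict_compl_eq_zero (by fun_prop) measurableSet_Icc fun u hu => ?_
    constructor <;> nlinarith [hx.1, hx.2, hu.1, hu.2]
  · rw [Measure.add_apply, Measure.smul_apply, Measure.smul_apply, couplingLaw,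
      map_restrict_compl_eq_zero (by fun_prop) measurableSet_Icc
        fun u hu => ⟨by linarith [hu.1], by linarith [hu.2]⟩,
      map_restrict_compl_eq_zero (f := fun z => Function.uncurry residualStep (x, z))
        (measurable_residualStep.comp measurable_prodMk_left)
        measurableSet_Icc fun u _ => residualStep_mem_Icc x u]
    simp
  · have hG := G_zero hx ▸ monotoneOn_G hx (left_mem_Icc.2 zero_le_one) hy hy.1
    have hmin : min (4 * y) 1 = 4 * min y (1 / 4) := by
      rw [mul_min_of_nonneg _ _ (by norm_num : (0:ℝ) ≤ 4)]
      norm_num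
    rw [Measure.add_apply, Measure.smul_apply, Measure.smul_apply, smul_eq_mul, smul_eq_mul,
      map_update_Iic hx.1 hx.2 hy.1, couplingLaw_Iic,
      show (fun z => Function.uncurry residualStep (x, z)) = Ginv x from residualStep_of_mem hx,
      map_Ginv_Iic hx hy, ← ENNReal.ofReal_mul (by norm_num), ← ENNReal.ofReal_mul (by norm_num),
      ← ENNReal.ofReal_add (mul_nonneg (by norm_num) (le_min (by linarith [hy.1]) zero_le_one))
        (mul_nonneg (by norm_num) hG), hmin, G]
    ring_nf

lemma eq_add_comp_of_comp_eq {μ : Measure ℝ} [IsProbabilityMeasure μ]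
    (hμ : updateKernel ∘ₘ μ = μ) (hsupp : ∀ᵐ x ∂μ, x ∈ Icc 0 1) :
    μ = ENNReal.ofReal (1 / 8) • couplingLaw + ENNReal.ofReal (7 / 8) • (residualKernel ∘ₘ μ) := by
  ext s hs
  have hpt : ∀ᵐ x ∂μ, updateKernel x s =
      ENNReal.ofReal (1 / 8) * couplingLaw s + ENNReal.ofReal (7 / 8) * residualKernel x s :=
    hsupp.mono fun x hx => by rw [updateKernel_eq_add hx]; rfl
  conv_lhs => rw [← hμ]
  rw [Measure.bind_apply hs updateKernel.aemeasurable, lintegral_congr_ae hpt,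
    lintegral_add_left measurable_const, lintegral_const, measure_univ, mul_one,
    lintegral_const_mul _ (residualKernel.measurable_coe hs),
    ← Measure.bind_apply hs residualKernel.aemeasurable]
  rfl

lemma measure_Ioi_one_eq_zero_of_comp_eq {μ : Measure ℝ} [IsFiniteMeasure μ]
    (hμ : updateKernel ∘ₘ μ = μ) : μ (Ioi 1) = 0 := by
  refine measure_eq_zero_of_comp_eq hμ measurableSet_Ioi
    (fun x hx => updateKernel_eq_zero measurableSet_Ioi fun u hu => ?_)
    (fun x hx => updateKernel_lt_one (a := 1 / (1 + x)) ?_ measurableSet_Ioi fun u hu hf => ?_)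
  · simp only [mem_Ioi, not_lt] at hx ⊢
    nlinarith [hu.1, hu.2]
  · have : (1:ℝ) < x := hx
    positivity
  · have : (1:ℝ) < x := hx
    simp only [mem_Ioi] at hf
    rw [div_le_iff₀ (by linarith)]
    nlinarith [hu.1, hu.2]

lemma measure_Iic_eq_zero_of_comp_eq {μ : Measure ℝ} [IsFiniteMeasure μ]
    (hμ : updateKernel ∘ₘ μ = μ) {t : ℝ} (ht : t < 0) : μ (Iic t) = 0 := by
  refine measure_eq_zero_of_comp_eq hμ measurableSet_Iic
    (fun x hx => updateKernel_eq_zero measurableSet_Iic fun u hu => ?_)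
    (fun x hx => updateKernel_lt_one (a := t / x) ?_ measurableSet_Iic fun u hu hf => ?_)
  · simp only [mem_Iic, not_le] at hx ⊢
    rcases le_total 0 x with h | h <;> nlinarith [hu.1, hu.2]
  · exact div_pos_of_neg_of_neg ht (lt_of_le_of_lt hx ht)
  · simp only [mem_Iic] at hf
    rw [div_le_iff_of_neg (lt_of_le_of_lt hx ht)]
    nlinarith [hu.1, hu.2]

lemma ae_mem_Icc_of_comp_eq {μ : Measure ℝ} [IsFiniteMeasure μ]
    (hμ : updateKernel ∘ₘ μ = μ) : ∀ᵐ x ∂μ, x ∈ Icc 0 1 := by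
  have hIio : μ (Iio 0) = 0 := by
    rw [← iUnion_Iic_eq_Iio_of_lt_of_tendsto (f := fun n : ℕ => -(1 / ((n : ℝ) + 1)))
      (fun n => by simp only [Left.neg_neg_iff]; positivity)
      (by simpa only [neg_zero] using (tendsto_one_div_add_atTop_nhds_zero_nat (𝕜 := ℝ)).neg)]
    exact measure_iUnion_null fun n =>
      measure_Iic_eq_zero_of_comp_eq hμ (by simp only [Left.neg_neg_iff]; positivity)
  rw [ae_iff]
  refine measure_mono_null (fun x hx => ?_)
    (measure_union_null hIio (measure_Ioi_one_eq_zero_of_comp_eq hμ))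
  simp only [mem_Icc, not_and_or, not_le] at hx
  exact hx

noncomputable def residualChain {Ω : Type*} (U : ℕ → Ω → ℝ) : ℕ → Ω → ℝ
  | 0, ω => U 0 ω / 4
  | n + 1, ω => residualStep (residualChain U n ω) (U (n + 1) ω)

section residualChain

variable {Ω : Type*} {U : ℕ → Ω → ℝ}

lemma measurable_residualChain {m : MeasurableSpace Ω} {n : ℕ}
    (hU : ∀ k ≤ n, Measurable[m] (U k)) : Measurable[m] (residualChain U n) := by
  induction n with
  | zero => exact (hU 0 le_rfl).div_const 4
  | succ n ih =>
    exact measurable_residualStep.comp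
      ((ih fun k hk => hU k (by omega)).prodMk (hU (n + 1) le_rfl))

lemma residualChain_mem_Icc {ω : Ω} (hω : U 0 ω ∈ Icc 0 1) (n : ℕ) :
    residualChain U n ω ∈ Icc 0 1 := by
  cases n with
  | zero =>
    show U 0 ω / 4 ∈ Icc 0 1
    exact ⟨by linarith [hω.1], by linarith [hω.2]⟩
  | succ n => exact residualStep_mem_Icc _ _

lemma eq_residualChain {X : ℕ → Ω → ℝ} (hX₀ : ∀ ω, X 0 ω = U 0 ω / 4)
    (hX : ∀ k ω, X (k + 1) ω = Ginv (X k ω) (U (k + 1) ω)) {ω : Ω} (hω : U 0 ω ∈ Icc 0 1)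
    (n : ℕ) : X n ω = residualChain U n ω := by
  induction n with
  | zero => exact hX₀ ω
  | succ n ih =>
    rw [hX, ih, residualChain, residualStep_of_mem (residualChain_mem_Icc hω n)]

variable [MeasurableSpace Ω] {P : Measure Ω}

lemma indepFun_residualChain {β : Type*} [MeasurableSpace β] {N : Ω → β}
    (hN : IndepFun N (fun ω k => U k ω) P) (n : ℕ) : IndepFun N (residualChain U n) P := by
  rw [IndepFun_iff_Indep] at hN ⊢
  refine indep_of_indep_of_le_right hN (Measurable.comap_le ?_)
  exact measurable_residualChain fun k _ =>
    (measurable_pi_apply k).comp (comap_measurable fun ω (j : ℕ) => U j ω)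

lemma indepFun_residualChain_succ (hUmeas : ∀ k, Measurable (U k)) (hUindep : iIndepFun U P)
    (n : ℕ) : IndepFun (residualChain U n) (U (n + 1)) P := by
  rw [IndepFun_iff_Indep]
  have h := indep_iSup_of_disjoint (fun k => (hUmeas k).comap_le) hUindep.iIndep
    (S := Iic n) (T := {n + 1}) (by simp)
  refine indep_of_indep_of_le_right (indep_of_indep_of_le_left h ?_) ?_
  · refine (measurable_residualChain fun k hk => (comap_measurable (U k)).mono ?_ le_rfl).comap_le
    exact le_iSup₂ (f := fun i (_ : i ∈ Iic n) => MeasurableSpace.comap (U i) inferInstance) k hk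
  · exact le_iSup₂ (f := fun i (_ : i ∈ ({n + 1} : Set ℕ)) =>
      MeasurableSpace.comap (U i) inferInstance) (n + 1) rfl

lemma map_residualChain (hUmeas : ∀ k, Measurable (U k))
    (hUunif : ∀ k, P.map (U k) = volume.restrict (Icc (0:ℝ) 1)) (hUindep : iIndepFun U P)
    (n : ℕ) : P.map (residualChain U n) = (fun ν => residualKernel ∘ₘ ν)^[n] couplingLaw := by
  induction n with
  | zero =>
    rw [Function.iterate_zero_apply, couplingLaw, ← hUunif 0,
      Measure.map_map (by fun_prop) (hUmeas 0)]
    rfl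
  | succ n ih =>
    have hmeas : Measurable (residualChain U n) := measurable_residualChain fun k _ => hUmeas k
    have : IsProbabilityMeasure P := hUindep.isProbabilityMeasure
    rw [Function.iterate_succ_apply', ← ih, residualKernel,
      lawKernel_comp measurable_residualStep, ← hUunif (n + 1),
      ← (indepFun_iff_map_prod_eq_prod_map_map hmeas.aemeasurable
        (hUmeas (n + 1)).aemeasurable).1 (indepFun_residualChain_succ hUmeas hUindep n),
      Measure.map_map measurable_residualStep (hmeas.prodMk (hUmeas (n + 1)))]
    rfl

end residualChain

theorem cftp_output_law_general {Ω : Type*} [MeasurableSpace Ω] (P : Measure Ω)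
    (U : ℕ → Ω → ℝ) (hUmeas : ∀ k, Measurable (U k))
    (hUunif : ∀ k, Measure.map (U k) P = volume.restrict (Set.Icc (0:ℝ) 1))
    (hUindep : iIndepFun U P)
    (N : Ω → ℕ) (hNmeas : Measurable N)
    (hNgeom : ∀ n : ℕ, P {ω | N ω = n} = ENNReal.ofReal ((1 / 8) * (7 / 8) ^ n))
    (hNindep : IndepFun N (fun ω k => U k ω) P)
    (X : ℕ → Ω → ℝ)
    (hX0 : ∀ ω, X 0 ω = U 0 ω / 4)
    (hXsucc : ∀ k ω, X (k + 1) ω = Ginv (X k ω) (U (k + 1) ω))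
    (μ : Measure ℝ) (hprob : IsProbabilityMeasure μ)
    (hfix : Measure.map (fun p : ℝ × ℝ => p.2 * p.1 + p.2 * (1 - p.2))
      (μ.prod (volume.restrict (Set.Icc (0:ℝ) 1))) = μ) :
    Measure.map (fun ω => X (N ω) ω) P = μ := by
  have hμ : updateKernel ∘ₘ μ = μ := by rwa [updateKernel, lawKernel_comp (by fun_prop)]
  have hμ_sum := eq_sum_iterate_comp (by norm_num : ENNReal.ofReal (7 / 8) < 1)
    (eq_add_comp_of_comp_eq hμ (ae_mem_Icc_of_comp_eq hμ))
  have hU₀ : ∀ᵐ ω ∂P, U 0 ω ∈ Icc 0 1 :=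
    ae_of_ae_map (hUmeas 0).aemeasurable (hUunif 0 ▸ ae_restrict_mem measurableSet_Icc)
  have hXY : (fun ω => X (N ω) ω) =ᵐ[P] fun ω => residualChain U (N ω) ω :=
    hU₀.mono fun ω hω => eq_residualChain hX0 hXsucc hω (N ω)
  rw [Measure.map_congr hXY, map_apply_index_eq_sum
    (fun n => measurable_residualChain fun k _ => hUmeas k) hNmeas
    (indepFun_residualChain hNindep), hμ_sum]
  congr with n : 1
  rw [← ENNReal.ofReal_pow (by norm_num), ← ENNReal.ofReal_mul (by norm_num), ← hNgeom,
    map_residualChain hUmeas hUunif hUindep]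
  rfl

/-- Coupling from the past with the multigamma coupler: if `(U_k)` are i.i.d. uniform
on `[0,1]`, `N` is geometric with `P(N = n) = (1/8)(7/8)^n` independent of `(U_k)`,
`X_0 = U_0/4` and `X_k = G_{X_{k−1}}^{−1}(U_k)` for `k ≥ 1`, then `X_N` has law `μ`,
the unique solution of `Y =_d U·Y + U·(1−U)`. -/
theorem cftp_output_law {Ω : Type*} [MeasurableSpace Ω] (P : Measure Ω)
    [IsProbabilityMeasure P]
    (U : ℕ → Ω → ℝ) (hUmeas : ∀ k, Measurable (U k))
    (hUunif : ∀ k, Measure.map (U k) P = volume.restrict (Set.Icc (0:ℝ) 1))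
    (hUindep : iIndepFun U P)
    (N : Ω → ℕ) (hNmeas : Measurable N)
    (hNgeom : ∀ n : ℕ, P {ω | N ω = n} = ENNReal.ofReal ((1 / 8) * (7 / 8) ^ n))
    (hNindep : IndepFun N (fun ω k => U k ω) P)
    (X : ℕ → Ω → ℝ)
    (hX0 : ∀ ω, X 0 ω = U 0 ω / 4)
    (hXsucc : ∀ k ω, X (k + 1) ω = Ginv (X k ω) (U (k + 1) ω))
    (μ : Measure ℝ) (hprob : IsProbabilityMeasure μ)
    (hfix : Measure.map (fun p : ℝ × ℝ => p.2 * p.1 + p.2 * (1 - p.2))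
      (μ.prod (volume.restrict (Set.Icc (0:ℝ) 1))) = μ) :
    Measure.map (fun ω => X (N ω) ω) P = μ :=
  cftp_output_law_general P U hUmeas hUunif hUindep N hNmeas hNgeom hNindep X hX0 hXsucc μ hprob
    hfix
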